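/- arXiv:1703.08167 — 3 statements merged into one kernel-verified Lean document; each statement's English description precedes it below -/
import Mathlib

section
/- Let m ≥ 1, α > 0, G ≥ 0, and let (η_t)_{t ≥ 0} be nonnegative real step sizes with η_t α ≤ 1 for all t. Let (h_t)_{t ≥ 0} be a sequence of vectors in ℝ^m whose coordinates satisfy |(h_t)_k| ≤ G for all t and all k. Define λ_0 = 0 and λ_{t+1} = Π_{ℝ₊^m}(λ_t + η_t (h_t − α λ_t)) for all t. Then ‖λ_t‖ ≤ √m · G / α for all t, and consequently ‖h_t − α λ_t‖ ≤ 2 √m · G for all t. -/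
lemma coord_norm_bound {m : ℕ} (x : EuclideanSpace ℝ (Fin m)) (C : ℝ) (hC : 0 ≤ C)
    (hx : ∀ k, |x k| ≤ C) : ‖x‖ ≤ Real.sqrt m * C := by
  rw [EuclideanSpace.norm_eq]
  have : ∑ k, ‖x k‖ ^ 2 ≤ ∑ _k : Fin m, C ^ 2 := by
    apply Finset.sum_le_sum
    intro k _
    have := hx k
    rw [Real.norm_eq_abs]
    nlinarith [abs_nonneg (x k)]
  calc Real.sqrt (∑ k, ‖x k‖ ^ 2) ≤ Real.sqrt (m * C ^ 2) := by
        apply Real.sqrt_le_sqrt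
        simpa using this
    _ = Real.sqrt m * C := by
        rw [Real.sqrt_mul (by positivity), Real.sqrt_sq hC]

open Finset in
/-- Boundedness of the dual iterates: if `λ₀ = 0` and
`λ_{t+1} = Π_{ℝ₊^m}(λ_t + η_t (h_t − α λ_t))` with `η_t α ≤ 1`, `η_t ≥ 0`, and
`|(h_t)_k| ≤ G`, then `‖λ_t‖ ≤ √m G / α` and `‖h_t − α λ_t‖ ≤ 2 √m G` for all `t`. -/
theorem dual_iterates_bounded (m : ℕ) (hm : 1 ≤ m) (α : ℝ) (hα : 0 < α) (G : ℝ) (hG : 0 ≤ G)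
    (η : ℕ → ℝ) (hη : ∀ t, 0 ≤ η t) (hηα : ∀ t, η t * α ≤ 1)
    (h : ℕ → EuclideanSpace ℝ (Fin m)) (hbound : ∀ t, ∀ k, |h t k| ≤ G)
    (lam : ℕ → EuclideanSpace ℝ (Fin m)) (hlam0 : lam 0 = 0)
    (hrec : ∀ t, ∀ k, lam (t + 1) k = max ((lam t + η t • (h t - α • lam t)) k) 0) :
    ∀ t, ‖lam t‖ ≤ Real.sqrt m * G / α ∧ ‖h t - α • lam t‖ ≤ 2 * Real.sqrt m * G := by
  have key : ∀ t, ∀ k, 0 ≤ lam t k ∧ lam t k ≤ G / α := by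
    intro t
    induction t with
    | zero => intro k; simp [hlam0]; positivity
    | succ t ih =>
      intro k
      have hk := ih k
      have hb := hbound t k
      have h1 := hη t
      have h2 := hηα t
      rw [hrec t k]
      constructor
      · exact le_max_right _ _
      · have hval : (lam t + η t • (h t - α • lam t)) k ≤ G / α := by
          have : (lam t + η t • (h t - α • lam t)) k
              = lam t k + η t * (h t k - α * lam t k) := by
            simp [Pi.add_apply, Pi.smul_apply, Pi.sub_apply, smul_eq_mul]
          rw [this]
          have hhk : h t k ≤ G := (abs_le.mp hb).2
          have : lam t k + η t * (h t k - α * lam t k)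
              = (1 - η t * α) * lam t k + η t * h t k := by ring
          rw [this]
          have step1 : (1 - η t * α) * lam t k ≤ (1 - η t * α) * (G / α) := by
            apply mul_le_mul_of_nonneg_left hk.2 (by linarith)
          have step2 : η t * h t k ≤ η t * G :=
            mul_le_mul_of_nonneg_left hhk h1
          have : (1 - η t * α) * (G / α) + η t * G = G / α := by
            field_simp; ring
          linarith
        have hGα : 0 ≤ G / α := by positivity
        exact max_le hval hGα
  intro t
  constructor
  · have := coord_norm_bound (lam t) (G / α) (by positivity)
      (fun k => by
        have hk := key t k
        rw [abs_le]; constructor <;> [linarith [hk.1, hk.2]; exact hk.2])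
    calc ‖lam t‖ ≤ Real.sqrt m * (G / α) := this
      _ = Real.sqrt m * G / α := by ring
  · have := coord_norm_bound (h t - α • lam t) (2 * G) (by positivity)
      (fun k => by
        have hk := key t k
        have hb := hbound t k
        have : (h t - α • lam t) k = h t k - α * lam t k := by
          simp [Pi.sub_apply, Pi.smul_apply, smul_eq_mul]
        rw [this, abs_le]
        have hbl := abs_le.mp hb
        have hαl : 0 ≤ α * lam t k := mul_nonneg hα.le hk.1
        have hαu : α * lam t k ≤ G := by
          have := hk.2
          calc α * lam t k ≤ α * (G / α) := by
                apply mul_le_mul_of_nonneg_left hk.2 hα.le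
            _ = G := by field_simp
        constructor <;> linarith [hbl.1, hbl.2])
    calc ‖h t - α • lam t‖ ≤ Real.sqrt m * (2 * G) := this
      _ = 2 * Real.sqrt m * G := by ring
end

section
/- Let κ ≥ 0 and set c = (1 + √(1 + 4κ))/2 (the positive root of δ − δ² + κ = 0). Let T > 0 and let δ : [0, T] → ℝ be continuous on [0, T] and differentiable on (0, T], with δ(0) ≤ c, and suppose that t · δ'(t) ≤ δ(t) − δ(t)² + κ for all t ∈ (0, T]. Then δ(t) ≤ c for all t ∈ [0, T]. -/
/-- Barrier argument (Lemma 5 of the paper): if `κ ≥ 0`, `c = (1+√(1+4κ))/2`,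
`δ` is continuous on `[0,T]`, differentiable on `(0,T]` with derivative `δ'`,
`δ(0) ≤ c`, and `t δ'(t) ≤ δ(t) − δ(t)² + κ` on `(0,T]`, then `δ ≤ c` on `[0,T]`. -/
theorem riccati_barrier (κ : ℝ) (hκ : 0 ≤ κ) (c : ℝ)
    (hc : c = (1 + Real.sqrt (1 + 4 * κ)) / 2)
    (T : ℝ) (hT : 0 < T) (δ δ' : ℝ → ℝ)
    (hcont : ContinuousOn δ (Set.Icc 0 T))
    (hderiv : ∀ t ∈ Set.Ioc 0 T, HasDerivAt δ (δ' t) t)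
    (h0 : δ 0 ≤ c)
    (hineq : ∀ t ∈ Set.Ioc 0 T, t * δ' t ≤ δ t - δ t ^ 2 + κ) :
    ∀ t ∈ Set.Icc 0 T, δ t ≤ c := by
  -- basic facts about c
  have hs2 : Real.sqrt (1 + 4 * κ) ^ 2 = 1 + 4 * κ := Real.sq_sqrt (by linarith)
  have hs1 : 1 ≤ Real.sqrt (1 + 4 * κ) := by
    nlinarith [Real.sqrt_nonneg (1 + 4 * κ), hs2]
  have hc1 : 1 ≤ c := by rw [hc]; linarith
  have hc2 : c ^ 2 = c + κ := by rw [hc]; nlinarith [hs2]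
  intro t ht
  refine le_of_forall_pos_le_add ?_
  intro ε hε
  -- the quadratic is strictly negative at c + ε
  have hq : (c + ε) - (c + ε) ^ 2 + κ < 0 := by nlinarith
  -- choose s > 0 with δ < c + ε on [0, s] ∩ [0, T]
  have hcont0 : ContinuousWithinAt δ (Set.Icc 0 T) 0 :=
    hcont 0 (Set.mem_Icc.mpr ⟨le_refl 0, hT.le⟩)
  have hev : ∀ᶠ x in nhdsWithin 0 (Set.Icc 0 T), δ x < c + ε :=
    hcont0.eventually_lt continuousWithinAt_const (show δ 0 < c + ε by linarith)
  obtain ⟨r, hr, hball⟩ := Metric.mem_nhdsWithin_iff.mp hev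
  set s : ℝ := min (r / 2) T with hsdef
  have hs0 : 0 < s := lt_min (by linarith) hT
  have hsT : s ≤ T := min_le_right _ _
  have hsmall : ∀ x ∈ Set.Icc (0:ℝ) s, δ x < c + ε := by
    intro x hx
    apply hball
    refine ⟨?_, hx.1, hx.2.trans hsT⟩
    rw [Metric.mem_ball, Real.dist_eq, sub_zero, abs_of_nonneg hx.1]
    exact lt_of_le_of_lt (hx.2.trans (min_le_left _ _)) (by linarith)
  -- barrier argument on [s, T]
  have hbar : ∀ x ∈ Set.Icc s T, δ x ≤ c + ε := by
    apply image_le_of_deriv_right_lt_deriv_boundary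
      (f' := δ') (B := fun _ => c + ε) (B' := fun _ => 0)
    · exact hcont.mono (Set.Icc_subset_Icc hs0.le le_rfl)
    · intro x hx
      exact (hderiv x ⟨lt_of_lt_of_le hs0 hx.1, hx.2.le⟩).hasDerivWithinAt
    · exact (hsmall s ⟨hs0.le, le_rfl⟩).le
    · intro x; exact hasDerivAt_const _ _
    · intro x hx hxe
      have hx0 : 0 < x := lt_of_lt_of_le hs0 hx.1
      have h1 := hineq x ⟨hx0, hx.2.le⟩
      rw [hxe] at h1
      have : x * δ' x < 0 := lt_of_le_of_lt h1 hq
      nlinarith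
  rcases le_or_gt t s with h | h
  · exact (hsmall t ⟨ht.1, h⟩).le
  · exact hbar t ⟨h.le, ht.2⟩
end

section
/- (Rodrigues' rotation formula.) Let X be a real 3×3 matrix with Xᵀ = −X and X ≠ 0, and let θ = √(Tr(Xᵀ X)/2) (so that 2θ² equals the squared Frobenius norm of X, and θ is the Euclidean norm of the axis vector of X). Then the matrix exponential of X is exp(X) = I + (sin θ / θ)·X + ((1 − cos θ)/θ²)·X². -/
open scoped Nat

open Matrix in
/-- Rodrigues' rotation formula: for a nonzero skew-symmetric real `3×3` matrix `X` with
`θ = √(Tr(Xᵀ X)/2)`, the matrix exponential is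
`exp X = I + (sin θ/θ)·X + ((1 − cos θ)/θ²)·X²`. -/
theorem rodrigues_formula (X : Matrix (Fin 3) (Fin 3) ℝ)
    (hskew : Xᵀ = -X) (hX : X ≠ 0)
    (θ : ℝ) (hθ : θ = Real.sqrt ((Xᵀ * X).trace / 2)) :
    NormedSpace.exp X =
      1 + (Real.sin θ / θ) • X + ((1 - Real.cos θ) / θ ^ 2) • (X ^ 2) := by
  have hE : ∀ i j, X j i = -X i j := fun i j => congrFun (congrFun hskew i) j
  set a := X 0 1 with ha
  set b := X 0 2 with hb
  set c := X 1 2 with hc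
  have h00 : X 0 0 = 0 := by have := hE 0 0; linarith
  have h11 : X 1 1 = 0 := by have := hE 1 1; linarith
  have h22 : X 2 2 = 0 := by have := hE 2 2; linarith
  have h10 : X 1 0 = -a := hE 0 1
  have h20 : X 2 0 = -b := hE 0 2
  have h21 : X 2 1 = -c := hE 1 2
  have hXeq : X = Matrix.of ![![0, a, b], ![-a, 0, c], ![-b, -c, 0]] := by
    ext i j
    fin_cases i <;> fin_cases j <;>
      simp [h00, h11, h22, h10, h20, h21, ha, hb, hc]
  have htrace : (Xᵀ * X).trace = 2 * (a ^ 2 + b ^ 2 + c ^ 2) := by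
    rw [hXeq]
    simp [Matrix.trace, Matrix.mul_apply, Matrix.transpose_apply, Fin.sum_univ_succ,
      Matrix.diag]
    ring
  have hspos : 0 < a ^ 2 + b ^ 2 + c ^ 2 := by
    have habc : a ≠ 0 ∨ b ≠ 0 ∨ c ≠ 0 := by
      by_contra h
      push_neg at h
      obtain ⟨ha0, hb0, hc0⟩ := h
      apply hX
      rw [hXeq, ha0, hb0, hc0]
      ext i j
      fin_cases i <;> fin_cases j <;>
        simp [Matrix.vecHead, Matrix.vecTail]
    rcases habc with h | h | h <;> positivity
  have hθ2 : θ ^ 2 = a ^ 2 + b ^ 2 + c ^ 2 := by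
    rw [hθ, Real.sq_sqrt (by rw [htrace]; linarith), htrace]
    ring
  have hθpos : 0 < θ := by
    rw [hθ]
    apply Real.sqrt_pos.mpr
    rw [htrace]; linarith
  have hθne : θ ≠ 0 := ne_of_gt hθpos
  -- The key algebraic identity: X³ = -θ² • X
  have hX3 : X ^ 3 = (-(θ ^ 2)) • X := by
    rw [hθ2, hXeq]
    ext i j
    fin_cases i <;> fin_cases j <;>
      (simp [pow_succ, Matrix.mul_apply, Fin.sum_univ_succ]; ring)
  have hodd : ∀ k : ℕ, X ^ (2 * k + 1) = ((-1 : ℝ) ^ k * θ ^ (2 * k)) • X := by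
    intro k
    induction k with
    | zero => simp
    | succ n ih =>
      have h1 : 2 * (n + 1) + 1 = (2 * n + 1) + 2 := by ring
      rw [h1, pow_add, ih, smul_mul_assoc]
      rw [← pow_succ', hX3, smul_smul]
      congr 1
      ring
  have heven : ∀ k : ℕ, X ^ (2 * k + 2) = ((-1 : ℝ) ^ k * θ ^ (2 * k)) • X ^ 2 := by
    intro k
    have h1 : 2 * k + 2 = (2 * k + 1) + 1 := by ring
    rw [h1, pow_succ, hodd, smul_mul_assoc]
    congr 1
    rw [pow_two]
  -- HasSum for the odd terms
  have hoddSum : HasSum (fun k : ℕ => (((2 * k + 1)! : ℝ))⁻¹ • X ^ (2 * k + 1))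
      ((Real.sin θ / θ) • X) := by
    have h := ((Real.hasSum_sin θ).div_const θ).smul_const X
    convert h using 2 with k
    rw [hodd k, smul_smul]
    congr 1
    rw [pow_succ]
    field_simp
  -- HasSum for the even terms
  have hevenSum : HasSum (fun k : ℕ => (((2 * k)! : ℝ))⁻¹ • X ^ (2 * k))
      (1 + ((1 - Real.cos θ) / θ ^ 2) • X ^ 2) := by
    have hcos := Real.hasSum_cos θ
    have h1 : HasSum (fun k : ℕ => (-1 : ℝ) ^ (k + 1) * θ ^ (2 * (k + 1)) / ↑(2 * (k + 1))!)
        (Real.cos θ - 1) := by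
      have h := (hasSum_nat_add_iff' (f := fun n : ℕ =>
        (-1 : ℝ) ^ n * θ ^ (2 * n) / (((2 * n)! : ℕ) : ℝ)) (g := Real.cos θ) 1).mpr hcos
      norm_num at h
      convert h using 2 with k
    have h2 : HasSum (fun k : ℕ => -((-1 : ℝ) ^ (k + 1) * θ ^ (2 * (k + 1)) / ↑(2 * (k + 1))!))
        (1 - Real.cos θ) := by
      simpa using h1.neg
    have h3 := ((h2.div_const (θ ^ 2)).smul_const (X ^ 2))
    have h4 : HasSum (fun k : ℕ => (((2 * (k + 1))! : ℝ))⁻¹ • X ^ (2 * (k + 1)))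
        (((1 - Real.cos θ) / θ ^ 2) • X ^ 2) := by
      convert h3 using 2 with k
      have h5 : 2 * (k + 1) = 2 * k + 2 := by ring
      rw [h5, heven k, smul_smul]
      congr 1
      field_simp
      ring
    have h6 := (hasSum_nat_add_iff (f := fun k : ℕ =>
      (((2 * k)! : ℝ))⁻¹ • X ^ (2 * k)) 1).mp h4
    simpa [add_comm] using h6
  have hsum : HasSum (fun n : ℕ => ((n ! : ℝ))⁻¹ • X ^ n)
      ((1 + ((1 - Real.cos θ) / θ ^ 2) • X ^ 2) + (Real.sin θ / θ) • X) :=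
    HasSum.even_add_odd hevenSum hoddSum
  rw [NormedSpace.exp_eq_tsum (𝕂 := ℝ)]
  exact hsum.tsum_eq.trans (by abel)
end
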